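/- Let q be a prime power, n, m natural numbers, and f ∈ F_q[x_1,…,x_n] a nonzero polynomial of total degree at most d with d < m·q^2. If f vanishes with multiplicity at least m at every point of the product set V = {u't_1 + v't_2 : u',v' ∈ F_q}^n ⊆ F_q(t_1,t_2)^n (viewing f as a polynomial over the rational function field F_q(t_1,t_2)), then f = 0. Equivalently, the evaluation matrix of all Hasse derivatives of weight less than m of all monomials of degree at most d at points of V has full column rank over F_q. -/

import Mathlib

/-!
Schwartz–Zippel with multiplicities: over a field, for a finite set `S` and `f ≠ 0` in `n`
variables, the vanishing orders of `f` at the points of `S^n` sum to at most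
`deg f · |S|^(n-1)`. By induction on `n`, write `f` as a polynomial in the first variable, of
degree `t`, with leading coefficient `g`. If `j` realises the order of `g` at `a`, then
`v(X) = (∂^(0,j) f)(X, a)` is a nonzero univariate polynomial of degree at most `t`, and the
order of `f` at `(b, a)` is at most the order of `g` at `a` plus the multiplicity of `b` as a
root of `v`; those multiplicities add up to at most `t`.

The `q²` linear forms `u t₁ + v t₂` are distinct elements of `F_q(t₁,t₂)`, so vanishing to order
`m` on `V` forces `m q^(2n) ≤ d q^(2(n-1))`, contradicting `d < m q²`.
-/

open MvPolynomial

/-- The multivariate Hasse derivative. -/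
noncomputable def hasseDeriv {n : ℕ} {R : Type*} [CommRing R] (i : Fin n →₀ ℕ)
    (f : MvPolynomial (Fin n) R) : MvPolynomial (Fin n) R :=
  (AddMonoidAlgebra.coeff f).sum fun d c =>
    (∏ k ∈ d.support ∪ i.support, Nat.choose (d k) (i k)) •
      MvPolynomial.monomial (d - i) c

/-- `f` vanishes to order (multiplicity) at least `m` at the point `a`. -/
def vanishesTo {n : ℕ} {R : Type*} [CommRing R] (f : MvPolynomial (Fin n) R)
    (a : Fin n → R) (m : ℕ) : Prop :=
  ∀ j : Fin n →₀ ℕ, (j.sum fun _ e => e) < m → MvPolynomial.eval a (hasseDeriv j f) = 0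

/-- The rational function field `F_q(t₁,t₂)`. -/
abbrev RatFld (F : Type*) [Field F] : Type _ := FractionRing (MvPolynomial (Fin 2) F)

/-- The ring map `F → F(t₁,t₂)`. -/
noncomputable def constMap (F : Type*) [Field F] : F →+* RatFld F :=
  (algebraMap (MvPolynomial (Fin 2) F) (RatFld F)).comp MvPolynomial.C

/-- The point `u t₁ + v t₂ ∈ F(t₁,t₂)^n` determined by `u, v ∈ F^n`. -/
noncomputable def ptUV {F : Type*} [Field F] {n : ℕ} (u v : Fin n → F) :
    Fin n → RatFld F := fun i =>
  algebraMap (MvPolynomial (Fin 2) F) (RatFld F)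
    (MvPolynomial.C (u i) * MvPolynomial.X 0 + MvPolynomial.C (v i) * MvPolynomial.X 1)

section Univariate

variable {R : Type*} [CommRing R]

theorem Polynomial.eval_hasseDeriv_rootMultiplicity_ne_zero {p : Polynomial R} (hp : p ≠ 0)
    (b : R) : (Polynomial.hasseDeriv (p.rootMultiplicity b) p).eval b ≠ 0 := by
  rw [← Polynomial.taylor_coeff, Polynomial.rootMultiplicity_eq_natTrailingDegree,
    ← Polynomial.taylor_apply]
  exact Polynomial.trailingCoeff_nonzero_iff_nonzero.mpr
    ((Polynomial.taylor_injective b).ne_iff' (map_zero _) |>.mpr hp)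

theorem Polynomial.sum_rootMultiplicity_le_natDegree [IsDomain R] (p : Polynomial R)
    (S : Finset R) : ∑ b ∈ S, p.rootMultiplicity b ≤ p.natDegree := by
  classical
  simp_rw [← Polynomial.count_roots]
  calc ∑ b ∈ S, p.roots.count b ≤ ∑ b ∈ S ∪ p.roots.toFinset, p.roots.count b :=
        Finset.sum_le_sum_of_subset Finset.subset_union_left
    _ = Multiset.card p.roots := Multiset.sum_count_eq_card fun b hb =>
          Finset.mem_union_right _ (Multiset.mem_toFinset.mpr hb)
    _ ≤ p.natDegree := Polynomial.card_roots' p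

end Univariate

theorem Finset.sum_piFinset_const_succ {α M : Type*} [DecidableEq α] [AddCommMonoid M]
    {n : ℕ} (S : Finset α) (g : (Fin (n + 1) → α) → M) :
    ∑ y ∈ Fintype.piFinset (fun _ => S), g y =
      ∑ a ∈ Fintype.piFinset (fun _ : Fin n => S), ∑ b ∈ S, g (Fin.cons b a) := by
  have h := Finset.filter_piFinset_eq_map_consEquiv (fun _ : Fin (n + 1) => S) (fun _ => True)
  simp only [Finset.filter_true] at h
  rw [h, Finset.sum_map, Finset.sum_product, Finset.sum_comm]
  rfl

section HasseDeriv

variable {n : ℕ} {R : Type*} [CommRing R]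

theorem coeff_hasseDeriv (j : Fin n →₀ ℕ) (f : MvPolynomial (Fin n) R) (e : Fin n →₀ ℕ) :
    coeff e (hasseDeriv j f) = (∏ k, ((e + j) k).choose (j k) : ℕ) * coeff (e + j) f := by
  classical
  rw [hasseDeriv, Finsupp.sum, coeff_sum, Finset.sum_eq_single (e + j)]
  · rw [coeff_smul, coeff_monomial, if_pos (add_tsub_cancel_right e j), nsmul_eq_mul,
      Finset.prod_subset (Finset.subset_univ _)]
    · rfl
    intro k _ hk
    simp only [Finset.mem_union, Finsupp.mem_support_iff, not_or, not_not] at hk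
    simp [hk.1, hk.2]
  · intro d _ hd
    rw [coeff_smul, coeff_monomial]
    split_ifs with h
    · -- `d - j = e` with `d ≠ e + j` forces `d k < j k` for some `k`, killing a binomial factor
      obtain ⟨k, hk⟩ : ∃ k, d k < j k := by
        by_contra! hle
        exact hd (by ext k; simp [← h, Nat.sub_add_cancel (hle k)])
      rw [Finset.prod_eq_zero (i := k)
        (Finset.mem_union_right _ (Finsupp.mem_support_iff.mpr (by omega)))
        (Nat.choose_eq_zero_of_lt hk), zero_smul]
    · exact smul_zero _
  · intro h
    rw [Finsupp.notMem_support_iff.mp h, map_zero, smul_zero, coeff_zero]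

theorem hasseDeriv_zero_right (j : Fin n →₀ ℕ) :
    hasseDeriv j (0 : MvPolynomial (Fin n) R) = 0 := by
  ext e
  simp [coeff_hasseDeriv]

theorem hasseDeriv_C_mul (j : Fin n →₀ ℕ) (r : R) (f : MvPolynomial (Fin n) R) :
    hasseDeriv j (C r * f) = C r * hasseDeriv j f := by
  ext e
  simp only [coeff_C_mul, coeff_hasseDeriv]
  ring

theorem hasseDeriv_eq_C_coeff_of_degree_eq_totalDegree {f : MvPolynomial (Fin n) R}
    {j : Fin n →₀ ℕ} (hj : j.degree = f.totalDegree) : hasseDeriv j f = C (coeff j f) := by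
  ext e
  rw [coeff_hasseDeriv, coeff_C]
  split_ifs with he
  · simp [← he, Nat.choose_self]
  · have he' : e.degree ≠ 0 := by rwa [Ne, Finsupp.degree_eq_zero_iff, eq_comm]
    have : coeff (e + j) f = 0 := by
      refine coeff_eq_zero_of_totalDegree_lt ?_
      change f.totalDegree < (e + j).degree
      rw [map_add, hj]
      omega
    simp [this]

theorem exists_eval_hasseDeriv_ne_zero {f : MvPolynomial (Fin n) R} (hf : f ≠ 0)
    (a : Fin n → R) : ∃ j, eval a (hasseDeriv j f) ≠ 0 := by
  obtain ⟨j, hj, hdeg⟩ := Finset.exists_mem_eq_sup f.support (support_nonempty.mpr hf)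
    fun s => s.sum fun _ e => e
  refine ⟨j, ?_⟩
  rw [hasseDeriv_eq_C_coeff_of_degree_eq_totalDegree hdeg.symm, eval_C]
  exact mem_support_iff.mp hj

end HasseDeriv

theorem Finsupp.cons_add_cons {n : ℕ} {M : Type*} [AddZeroClass M] (y z : M)
    (s t : Fin n →₀ M) :
    Finsupp.cons y s + Finsupp.cons z t = Finsupp.cons (y + z) (s + t) := by
  ext k
  refine Fin.cases ?_ (fun k => ?_) k <;> simp

theorem Finsupp.degree_cons {n : ℕ} (y : ℕ) (s : Fin n →₀ ℕ) :
    (Finsupp.cons y s).degree = y + s.degree :=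
  Finsupp.sum_cons n s y

section VanishingOrder

variable {n : ℕ} {R : Type*} [CommRing R]

/-- The largest `m` with `vanishesTo f a m`; junk value `0` when `f = 0`. -/
noncomputable def vanishingOrder (f : MvPolynomial (Fin n) R) (a : Fin n → R) : ℕ :=
  sInf {M | ∃ j : Fin n →₀ ℕ, j.degree = M ∧ eval a (hasseDeriv j f) ≠ 0}

theorem vanishingOrder_le_degree {f : MvPolynomial (Fin n) R} {a : Fin n → R}
    {j : Fin n →₀ ℕ} (h : eval a (hasseDeriv j f) ≠ 0) : vanishingOrder f a ≤ j.degree :=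
  Nat.sInf_le ⟨j, rfl, h⟩

theorem exists_degree_eq_vanishingOrder {f : MvPolynomial (Fin n) R} (hf : f ≠ 0)
    (a : Fin n → R) :
    ∃ j : Fin n →₀ ℕ, j.degree = vanishingOrder f a ∧ eval a (hasseDeriv j f) ≠ 0 :=
  have ⟨j, hj⟩ := exists_eval_hasseDeriv_ne_zero hf a
  Nat.sInf_mem (s := {M | ∃ j : Fin n →₀ ℕ, j.degree = M ∧ eval a (hasseDeriv j f) ≠ 0})
    ⟨_, j, rfl, hj⟩

theorem le_vanishingOrder {f : MvPolynomial (Fin n) R} (hf : f ≠ 0) {a : Fin n → R} {m : ℕ}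
    (h : vanishesTo f a m) : m ≤ vanishingOrder f a := by
  obtain ⟨j, hj, hne⟩ := exists_degree_eq_vanishingOrder hf a
  by_contra! hlt
  exact hne (h j (hj.trans_lt hlt))

end VanishingOrder

section FirstVariable

variable {n : ℕ} {R : Type*} [CommRing R]

/-- For `P = finSuccEquiv R n f`, this is `X ↦ (∂^(0, j) f) (X, a)`. -/
noncomputable def evalTailHasseDeriv (j : Fin n →₀ ℕ) (a : Fin n → R)
    (P : Polynomial (MvPolynomial (Fin n) R)) : Polynomial R :=
  ⟨⟨P.toFinsupp.coeff.mapRange (fun c => eval a (hasseDeriv j c))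
    (by rw [hasseDeriv_zero_right, map_zero])⟩⟩

theorem coeff_evalTailHasseDeriv (j : Fin n →₀ ℕ) (a : Fin n → R)
    (P : Polynomial (MvPolynomial (Fin n) R)) (s : ℕ) :
    (evalTailHasseDeriv j a P).coeff s = eval a (hasseDeriv j (P.coeff s)) :=
  rfl

theorem coeff_finSuccEquiv_hasseDeriv_cons (l : ℕ) (j : Fin n →₀ ℕ)
    (f : MvPolynomial (Fin (n + 1)) R) (s : ℕ) :
    (finSuccEquiv R n (hasseDeriv (Finsupp.cons l j) f)).coeff s =
      hasseDeriv j ((Polynomial.hasseDeriv l (finSuccEquiv R n f)).coeff s) := by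
  ext e
  rw [finSuccEquiv_coeff_coeff, coeff_hasseDeriv, coeff_hasseDeriv, Polynomial.hasseDeriv_coeff,
    ← C_eq_coe_nat, coeff_C_mul, Finsupp.cons_add_cons, ← finSuccEquiv_coeff_coeff,
    Fin.prod_univ_succ]
  simp only [Finsupp.cons_zero, Finsupp.cons_succ]
  push_cast
  ring

theorem eval_cons_hasseDeriv_cons (l : ℕ) (j : Fin n →₀ ℕ) (f : MvPolynomial (Fin (n + 1)) R)
    (b : R) (a : Fin n → R) :
    eval (Fin.cons b a) (hasseDeriv (Finsupp.cons l j) f) =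
      (Polynomial.hasseDeriv l (evalTailHasseDeriv j a (finSuccEquiv R n f))).eval b := by
  rw [eval_eq_eval_mv_eval']
  congr 1
  ext s
  rw [Polynomial.coeff_map, coeff_finSuccEquiv_hasseDeriv_cons, Polynomial.hasseDeriv_coeff,
    Polynomial.hasseDeriv_coeff, coeff_evalTailHasseDeriv, ← C_eq_coe_nat, hasseDeriv_C_mul,
    map_mul, eval_C]

end FirstVariable

section SchwartzZippel

open scoped Finset

variable {K : Type*} [Field K]

theorem sum_vanishingOrder_cons_le {n : ℕ} {f : MvPolynomial (Fin (n + 1)) K} (hf : f ≠ 0)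
    (S : Finset K) (a : Fin n → K) :
    ∑ b ∈ S, vanishingOrder f (Fin.cons b a) ≤
      #S * vanishingOrder (finSuccEquiv K n f).leadingCoeff a +
        (finSuccEquiv K n f).natDegree := by
  set P := finSuccEquiv K n f
  have hP : P ≠ 0 := (map_ne_zero_iff _ (AlgEquiv.injective _)).mpr hf
  obtain ⟨j, hj, hne⟩ :=
    exists_degree_eq_vanishingOrder (Polynomial.leadingCoeff_ne_zero.mpr hP) a
  set v := evalTailHasseDeriv j a P
  have hv : v ≠ 0 := by
    have hvt : v.coeff P.natDegree ≠ 0 := hne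
    exact fun h0 => hvt (by rw [h0, Polynomial.coeff_zero])
  have hvdeg : v.natDegree ≤ P.natDegree := by
    refine Polynomial.natDegree_le_iff_coeff_eq_zero.mpr fun s hs => ?_
    rw [coeff_evalTailHasseDeriv, Polynomial.coeff_eq_zero_of_natDegree_lt hs,
      hasseDeriv_zero_right, map_zero]
  have hfibre (b : K) : vanishingOrder f (Fin.cons b a) ≤
      vanishingOrder P.leadingCoeff a + v.rootMultiplicity b := by
    have hb : eval (Fin.cons b a) (hasseDeriv (Finsupp.cons (v.rootMultiplicity b) j) f) ≠ 0 := by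
      rw [eval_cons_hasseDeriv_cons]
      exact Polynomial.eval_hasseDeriv_rootMultiplicity_ne_zero hv b
    have := vanishingOrder_le_degree hb
    rw [Finsupp.degree_cons, hj] at this
    omega
  calc ∑ b ∈ S, vanishingOrder f (Fin.cons b a)
      ≤ ∑ b ∈ S, (vanishingOrder P.leadingCoeff a + v.rootMultiplicity b) :=
        Finset.sum_le_sum fun b _ => hfibre b
    _ = #S * vanishingOrder P.leadingCoeff a + ∑ b ∈ S, v.rootMultiplicity b := by
        rw [Finset.sum_add_distrib, Finset.sum_const, smul_eq_mul]
    _ ≤ #S * vanishingOrder P.leadingCoeff a + P.natDegree := by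
        grw [Polynomial.sum_rootMultiplicity_le_natDegree, hvdeg]

theorem sum_vanishingOrder_mul_card_le [DecidableEq K] {n : ℕ} (f : MvPolynomial (Fin n) K)
    (S : Finset K) :
    (∑ a ∈ Fintype.piFinset fun _ => S, vanishingOrder f a) * #S ≤ f.totalDegree * #S ^ n := by
  induction n with
  | zero =>
    have (a : Fin 0 → K) : vanishingOrder f a = 0 := by
      rcases eq_or_ne f 0 with rfl | hf
      · simp [vanishingOrder, hasseDeriv_zero_right]
      · obtain ⟨j, hj, -⟩ := exists_degree_eq_vanishingOrder hf a
        rw [← hj, Subsingleton.elim j 0, map_zero]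
    simp [this]
  | succ n ih =>
    rcases eq_or_ne f 0 with rfl | hf
    · simp [vanishingOrder, hasseDeriv_zero_right]
    set P := finSuccEquiv K n f
    have hdeg : P.leadingCoeff.totalDegree + P.natDegree ≤ f.totalDegree :=
      totalDegree_coeff_finSuccEquiv_add_le f _
        (Polynomial.leadingCoeff_ne_zero.mpr ((map_ne_zero_iff _ (AlgEquiv.injective _)).mpr hf))
    calc (∑ y ∈ Fintype.piFinset fun _ => S, vanishingOrder f y) * #S
        = (∑ a ∈ Fintype.piFinset fun _ => S, ∑ b ∈ S, vanishingOrder f (Fin.cons b a)) * #S :=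
          by rw [Finset.sum_piFinset_const_succ]
      _ ≤ (∑ a ∈ Fintype.piFinset fun _ => S,
            (#S * vanishingOrder P.leadingCoeff a + P.natDegree)) * #S := by
          gcongr with a
          exact sum_vanishingOrder_cons_le hf S a
      _ = #S * ((∑ a ∈ Fintype.piFinset fun _ => S, vanishingOrder P.leadingCoeff a) * #S) +
            P.natDegree * #S ^ (n + 1) := by
          rw [Finset.sum_add_distrib, ← Finset.mul_sum, Finset.sum_const,
            Fintype.card_piFinset_const, smul_eq_mul]
          ring
      _ ≤ #S * (P.leadingCoeff.totalDegree * #S ^ n) + P.natDegree * #S ^ (n + 1) := by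
          grw [ih]
      _ = (P.leadingCoeff.totalDegree + P.natDegree) * #S ^ (n + 1) := by ring
      _ ≤ f.totalDegree * #S ^ (n + 1) := by gcongr

theorem eq_zero_of_vanishesTo_of_totalDegree_lt [DecidableEq K] {n m : ℕ}
    {f : MvPolynomial (Fin n) K} (S : Finset K) (hdeg : f.totalDegree < m * #S)
    (hvan : ∀ a ∈ Fintype.piFinset fun _ => S, vanishesTo f a m) : f = 0 := by
  by_contra hf
  have hS : 0 < #S := Nat.pos_of_ne_zero fun h => by simp [h] at hdeg
  have hsum : #S ^ n * m ≤ ∑ a ∈ Fintype.piFinset fun _ => S, vanishingOrder f a := by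
    rw [← Fintype.card_piFinset_const, ← smul_eq_mul, ← Finset.sum_const]
    exact Finset.sum_le_sum fun a ha => le_vanishingOrder hf (hvan a ha)
  have := (Nat.mul_le_mul_right #S hsum).trans (sum_vanishingOrder_mul_card_le f S)
  rw [mul_assoc, mul_comm (#S ^ n)] at this
  exact (Nat.le_of_mul_le_mul_right this (by positivity)).not_gt hdeg

end SchwartzZippel

theorem MvPolynomial.totalDegree_map_of_injective {σ R S : Type*} [CommSemiring R]
    [CommSemiring S] {φ : R →+* S} (hφ : Function.Injective φ) (f : MvPolynomial σ R) :
    (map φ f).totalDegree = f.totalDegree := by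
  simp only [totalDegree, support_map_of_injective f hφ]

theorem injective_C_mul_X_zero_add_C_mul_X_one {F : Type*} [Field F] :
    Function.Injective fun p : F × F =>
      (C p.1 * X 0 + C p.2 * X 1 : MvPolynomial (Fin 2) F) := by
  intro p p' h
  have h0 := congrArg (coeff (Finsupp.single 0 1)) h
  have h1 := congrArg (coeff (Finsupp.single 1 1)) h
  simp [coeff_X, Finsupp.single_eq_single_iff] at h0 h1
  exact Prod.ext h0 h1

/-- if `f ∈ F_q[x_1,…,x_n]` has total degree at most `d < m q²` and, viewed over
`F_q(t₁,t₂)`, vanishes with multiplicity at least `m` at every point of the product set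
`V = {u't₁ + v't₂ : u',v' ∈ F_q}^n`, then `f = 0`. -/
theorem vanish_on_V_eq_zero {F : Type*} [Field F] [Fintype F] {n m d : ℕ}
    (f : MvPolynomial (Fin n) F) (hdeg : f.totalDegree ≤ d)
    (hd : d < m * Fintype.card F ^ 2)
    (hvan : ∀ u v : Fin n → F,
      vanishesTo (MvPolynomial.map (constMap F) f) (ptUV u v) m) :
    f = 0 := by
  classical
  set L : F × F → RatFld F := fun p =>
    algebraMap (MvPolynomial (Fin 2) F) (RatFld F) (C p.1 * X 0 + C p.2 * X 1)
  have hL : Function.Injective L :=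
    (IsFractionRing.injective _ _).comp injective_C_mul_X_zero_add_C_mul_X_one
  have hcard : (Finset.univ.image L).card = Fintype.card F ^ 2 := by
    rw [Finset.card_image_of_injective _ hL, Finset.card_univ, Fintype.card_prod, sq]
  refine map_injective _ (constMap F).injective <| .trans
    (eq_zero_of_vanishesTo_of_totalDegree_lt (m := m) (Finset.univ.image L) ?_ fun a ha => ?_)
    (map_zero _).symm
  · rw [hcard, totalDegree_map_of_injective (constMap F).injective]
    omega
  · choose p hp using fun i => Finset.mem_image.mp (Fintype.mem_piFinset.mp ha i)
    obtain rfl : a = ptUV (fun i => (p i).1) (fun i => (p i).2) := by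
      ext i
      exact (hp i).2.symm
    exact hvan _ _
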